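/- arXiv:1705.00765 — 2 statements merged into one kernel-verified Lean document; each statement's English description precedes it below -/
import Mathlib

section
/- Let n ≥ 1 and let f : (0,∞) × ℝⁿ → ℝ be a smooth positive solution of the heat equation ∂f/∂t = Δf that is ℤⁿ-periodic in the space variable. Let v = −ln f − (n/2)ln(4πt) and W(t) = ∫_{[0,1]ⁿ} (t²|∇v(t,x)|² − 2nt) (4πt)^{−n/2} e^{−v(t,x)} dx. Then W is differentiable on (0,∞) and dW/dt = −2t² ∫_{[0,1]ⁿ} ( |∇²v − (1/t)I|² + |∇v|²/t ) (4πt)^{−n/2} e^{−v} dx, which is ≤ 0. -/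
/-!
The weight `(4πt)^{-n/2} e^{-v}` is `f` itself, so `W(t) = ∫ (t²|∇f|²/f - 2ntf)`. Differentiating
under the integral sign, with `∂ₜf = Δf` and `∂ₜ` commuting with `∇`, the time derivative of the
integrand is pointwise equal to
`-2t² (|∇²v - I/t|² + |∇v|²/t) f + t² Δ(|∇f|²/f) + (4 - 2n) t Δf`;
this follows from `∇²v = (∇f ⊗ ∇f - f ∇²f)/f²` and Bochner's formula
`Δ|∇f|² = 2|∇²f|² + 2⟨∇f, ∇Δf⟩`. The last two terms are Laplacians of `ℤⁿ`-periodic functions,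
so by the divergence theorem they integrate to zero over the unit cube.
-/

open MeasureTheory Real

noncomputable section

/-- Partial derivative of `g` at `x` in the `i`-th coordinate direction. -/
def pd {n : ℕ} (i : Fin n) (g : (Fin n → ℝ) → ℝ) (x : Fin n → ℝ) : ℝ :=
  fderiv ℝ g x (Pi.single i 1)

/-- Squared Euclidean norm of the (spatial) gradient of `g` at `x`. -/
def gradSq {n : ℕ} (g : (Fin n → ℝ) → ℝ) (x : Fin n → ℝ) : ℝ :=
  ∑ i, (pd i g x) ^ 2

/-- The (spatial) Laplacian of `g` at `x`. -/
def lap {n : ℕ} (g : (Fin n → ℝ) → ℝ) (x : Fin n → ℝ) : ℝ :=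
  ∑ i, pd i (pd i g) x

/-- The `(i,j)` entry of the Hessian of `g` at `x`. -/
def hess {n : ℕ} (i j : Fin n) (g : (Fin n → ℝ) → ℝ) (x : Fin n → ℝ) : ℝ :=
  pd i (pd j g) x

open Topology
open scoped ContDiff

section PartialDerivative

variable {n : ℕ} {g g₁ g₂ : (Fin n → ℝ) → ℝ} {x : Fin n → ℝ} {i : Fin n}

theorem HasFDerivAt.pd_eq {L : (Fin n → ℝ) →L[ℝ] ℝ} (h : HasFDerivAt g L x) (i : Fin n) :
    pd i g x = L (Pi.single i 1) := by
  rw [pd, h.fderiv]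

theorem pd_sub (h₁ : DifferentiableAt ℝ g₁ x) (h₂ : DifferentiableAt ℝ g₂ x) :
    pd i (fun y => g₁ y - g₂ y) x = pd i g₁ x - pd i g₂ x :=
  (h₁.hasFDerivAt.fun_sub h₂.hasFDerivAt).pd_eq i

theorem pd_neg (h : DifferentiableAt ℝ g x) : pd i (fun y => -g y) x = -pd i g x :=
  h.hasFDerivAt.fun_neg.pd_eq i

theorem pd_const_mul (c : ℝ) (h : DifferentiableAt ℝ g x) :
    pd i (fun y => c * g y) x = c * pd i g x :=
  (h.hasFDerivAt.const_mul c).pd_eq i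

theorem pd_mul (h₁ : DifferentiableAt ℝ g₁ x) (h₂ : DifferentiableAt ℝ g₂ x) :
    pd i (fun y => g₁ y * g₂ y) x = pd i g₁ x * g₂ x + g₁ x * pd i g₂ x := by
  rw [(h₁.hasFDerivAt.fun_mul h₂.hasFDerivAt).pd_eq i, pd, pd]
  simp only [add_apply, smul_apply, smul_eq_mul]
  ring

theorem pd_inv (h : DifferentiableAt ℝ g x) (hx : g x ≠ 0) :
    pd i (fun y => (g y)⁻¹) x = -pd i g x / g x ^ 2 := by
  have hinv : HasFDerivAt (fun y => (g y)⁻¹) (-(g x ^ 2)⁻¹ • fderiv ℝ g x) x :=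
    (hasDerivAt_inv hx).comp_hasFDerivAt x h.hasFDerivAt
  rw [hinv.pd_eq i, pd]
  simp only [smul_apply, smul_eq_mul, neg_mul]
  ring

theorem pd_div (h₁ : DifferentiableAt ℝ g₁ x) (h₂ : DifferentiableAt ℝ g₂ x) (hx : g₂ x ≠ 0) :
    pd i (fun y => g₁ y / g₂ y) x = (pd i g₁ x * g₂ x - g₁ x * pd i g₂ x) / g₂ x ^ 2 := by
  have e : (fun y => g₁ y / g₂ y) = fun y => g₁ y * (g₂ y)⁻¹ := funext fun y => div_eq_mul_inv _ _
  rw [e, pd_mul h₁ (h₂.fun_inv hx), pd_inv h₂ hx]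
  field_simp
  ring

theorem pd_pow (h : DifferentiableAt ℝ g x) (k : ℕ) :
    pd i (fun y => g y ^ k) x = k * g x ^ (k - 1) * pd i g x := by
  rw [(h.hasFDerivAt.pow k).pd_eq i, pd]
  simp

theorem pd_finset_sum {ι : Type*} (s : Finset ι) {G : ι → (Fin n → ℝ) → ℝ}
    (h : ∀ j ∈ s, DifferentiableAt ℝ (G j) x) :
    pd i (fun y => ∑ j ∈ s, G j y) x = ∑ j ∈ s, pd i (G j) x := by
  rw [(HasFDerivAt.fun_sum fun j hj => (h j hj).hasFDerivAt).pd_eq i]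
  simp [pd]

theorem ContDiff.pd (hg : ContDiff ℝ ∞ g) (i : Fin n) : ContDiff ℝ ∞ (pd i g) :=
  (hg.fderiv_right (by simp)).clm_apply contDiff_const

theorem pd_comm (hg : ContDiff ℝ ∞ g) (i j : Fin n) (x : Fin n → ℝ) :
    pd i (pd j g) x = pd j (pd i g) x := by
  have hD : HasFDerivAt (fderiv ℝ g) (fderiv ℝ (fderiv ℝ g) x) x :=
    ((hg.fderiv_right (m := ∞) (by simp)).differentiable (by simp) x).hasFDerivAt
  have hpd (k : Fin n) : HasFDerivAt (pd k g) ((fderiv ℝ (fderiv ℝ g) x).flip (Pi.single k 1)) x :=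
    hD.clm_apply (hasFDerivAt_const _ x) |>.congr_fderiv (by ext; simp)
  rw [(hpd j).pd_eq, (hpd i).pd_eq]
  exact (hg.contDiffAt.isSymmSndFDerivAt (by simp [ENat.LEInfty.out])) _ _

theorem gradSq_nonneg (g : (Fin n → ℝ) → ℝ) (x : Fin n → ℝ) : 0 ≤ gradSq g x :=
  Finset.sum_nonneg fun _ _ => sq_nonneg _

end PartialDerivative

section Laplacian

variable {n : ℕ} {g φ ψ : (Fin n → ℝ) → ℝ}

theorem ContDiff.gradSq (hg : ContDiff ℝ ∞ g) : ContDiff ℝ ∞ (gradSq g) :=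
  ContDiff.sum fun i _ => (hg.pd i).pow 2

theorem lap_finset_sum {ι : Type*} (s : Finset ι) {G : ι → (Fin n → ℝ) → ℝ}
    (hG : ∀ j ∈ s, ContDiff ℝ ∞ (G j)) (x : Fin n → ℝ) :
    lap (fun y => ∑ j ∈ s, G j y) x = ∑ j ∈ s, lap (G j) x := by
  have hpd (i : Fin n) : pd i (fun y => ∑ j ∈ s, G j y) = fun y => ∑ j ∈ s, pd i (G j) y :=
    funext fun y => pd_finset_sum s fun j hj => (hG j hj).differentiable (by simp) y
  simp only [lap, hpd, pd_finset_sum s fun j hj => ((hG j hj).pd _).differentiable (by simp) x]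
  exact Finset.sum_comm

theorem lap_sq (hφ : ContDiff ℝ ∞ φ) (x : Fin n → ℝ) :
    lap (fun y => φ y ^ 2) x = 2 * gradSq φ x + 2 * φ x * lap φ x := by
  have hpd (i : Fin n) : pd i (fun y => φ y ^ 2) = fun y => 2 * φ y * pd i φ y := funext fun y => by
    rw [pd_pow (hφ.differentiable (by simp) y)]
    norm_num
  have hterm (i : Fin n) :
      pd i (pd i (fun y => φ y ^ 2)) x = 2 * pd i φ x ^ 2 + 2 * φ x * pd i (pd i φ) x := by
    rw [hpd, pd_mul (g₁ := fun y => 2 * φ y) ((contDiff_const.mul hφ).differentiable (by simp) x)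
      ((hφ.pd i).differentiable (by simp) x), pd_const_mul _ (hφ.differentiable (by simp) x)]
    ring
  simp only [lap, gradSq, hterm, Finset.sum_add_distrib, Finset.mul_sum]

theorem lap_pd (hg : ContDiff ℝ ∞ g) (j : Fin n) (x : Fin n → ℝ) :
    lap (pd j g) x = pd j (lap g) x := by
  have hcomm (i : Fin n) : pd i (pd i (pd j g)) x = pd j (pd i (pd i g)) x := by
    rw [show pd i (pd j g) = pd j (pd i g) from funext (pd_comm hg i j), pd_comm (hg.pd i)]
  unfold lap
  rw [pd_finset_sum _ fun i _ => ((hg.pd i).pd i).differentiable (by simp) x]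
  exact Finset.sum_congr rfl fun i _ => hcomm i

theorem pd_gradSq (hg : ContDiff ℝ ∞ g) (i : Fin n) (x : Fin n → ℝ) :
    pd i (gradSq g) x = 2 * ∑ j, pd j g x * hess i j g x := by
  unfold gradSq
  rw [pd_finset_sum _ fun j _ => ((hg.pd j).pow 2).differentiable (by simp) x, Finset.mul_sum]
  refine Finset.sum_congr rfl fun j _ => ?_
  rw [pd_pow ((hg.pd j).differentiable (by simp) x), hess]
  norm_num
  ring

theorem sum_pd_gradSq_mul_pd (hg : ContDiff ℝ ∞ g) (x : Fin n → ℝ) :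
    ∑ i, pd i (gradSq g) x * pd i g x = 2 * ∑ i, ∑ j, hess i j g x * pd i g x * pd j g x := by
  simp only [pd_gradSq hg, Finset.mul_sum, Finset.sum_mul]
  exact Finset.sum_congr rfl fun i _ => Finset.sum_congr rfl fun j _ => by ring

theorem lap_gradSq (hg : ContDiff ℝ ∞ g) (x : Fin n → ℝ) :
    lap (gradSq g) x = 2 * ∑ i, ∑ j, hess i j g x ^ 2 + 2 * ∑ j, pd j g x * pd j (lap g) x := by
  unfold gradSq
  rw [lap_finset_sum _ fun j _ => (hg.pd j).pow 2]
  simp only [lap_sq (hg.pd _), lap_pd hg, Finset.sum_add_distrib, ← Finset.mul_sum, gradSq, hess]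
  rw [Finset.sum_comm]
  simp only [mul_assoc, ← Finset.mul_sum]

theorem lap_div (hφ : ContDiff ℝ ∞ φ) (hψ : ContDiff ℝ ∞ ψ) (hψ0 : ∀ y, ψ y ≠ 0)
    (x : Fin n → ℝ) :
    lap (fun y => φ y / ψ y) x = lap φ x / ψ x - 2 * (∑ i, pd i φ x * pd i ψ x) / ψ x ^ 2
      - φ x * lap ψ x / ψ x ^ 2 + 2 * φ x * gradSq ψ x / ψ x ^ 3 := by
  have hd {h : (Fin n → ℝ) → ℝ} (hh : ContDiff ℝ ∞ h) (y : Fin n → ℝ) :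
      DifferentiableAt ℝ h y :=
    hh.differentiable (by simp) y
  have hpd (i : Fin n) : pd i (fun y => φ y / ψ y)
      = fun y => (pd i φ y * ψ y - φ y * pd i ψ y) / ψ y ^ 2 :=
    funext fun y => pd_div (hd hφ y) (hd hψ y) (hψ0 y)
  have hterm (i : Fin n) : pd i (pd i (fun y => φ y / ψ y)) x
      = pd i (pd i φ) x / ψ x - 2 * (pd i φ x * pd i ψ x) / ψ x ^ 2
        - φ x * pd i (pd i ψ) x / ψ x ^ 2 + 2 * φ x * pd i ψ x ^ 2 / ψ x ^ 3 := by
    rw [hpd, pd_div (hd (((hφ.pd i).mul hψ).sub (hφ.mul (hψ.pd i))) x) (hd (hψ.pow 2) x)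
      (pow_ne_zero 2 (hψ0 x)), pd_sub (hd ((hφ.pd i).mul hψ) x) (hd (hφ.mul (hψ.pd i)) x),
      pd_mul (hd (hφ.pd i) x) (hd hψ x), pd_mul (hd hφ x) (hd (hψ.pd i) x),
      pd_pow (hd hψ x)]
    field_simp [hψ0 x]
    ring
  simp only [lap, gradSq, hterm, Finset.sum_add_distrib, Finset.sum_sub_distrib, Finset.sum_div,
    Finset.mul_sum]

end Laplacian

theorem sum_sq_sub_mul_ite {n : ℕ} (h : Fin n → Fin n → ℝ) (r : ℝ) :
    ∑ i, ∑ j, (h i j - r * (if i = j then (1:ℝ) else 0)) ^ 2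
      = ∑ i, ∑ j, h i j ^ 2 - 2 * r * ∑ i, h i i + n * r ^ 2 := by
  have e (i j : Fin n) : (h i j - r * (if i = j then (1:ℝ) else 0)) ^ 2
      = h i j ^ 2 + if i = j then r ^ 2 - 2 * r * h i j else 0 := by
    split_ifs <;> ring
  simp only [e, Finset.sum_add_distrib, Finset.sum_ite_eq, Finset.mem_univ, if_true,
    Finset.sum_sub_distrib, Finset.sum_const, Finset.card_univ, Fintype.card_fin, nsmul_eq_mul,
    ← Finset.mul_sum]
  ring

section LogPotential

variable {n : ℕ} {g : (Fin n → ℝ) → ℝ} (hg : ContDiff ℝ ∞ g) (hpos : ∀ y, 0 < g y) (c : ℝ)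
include hg hpos

theorem pd_neg_log_sub (j : Fin n) (x : Fin n → ℝ) :
    pd j (fun y => -log (g y) - c) x = -(pd j g x / g x) := by
  rw [(((hg.differentiable (by simp) x).hasFDerivAt.log (hpos x).ne').fun_neg.sub_const c).pd_eq]
  simp only [neg_apply, smul_apply, smul_eq_mul, neg_inj]
  exact inv_mul_eq_div _ _

theorem hess_neg_log_sub (i j : Fin n) (x : Fin n → ℝ) :
    hess i j (fun y => -log (g y) - c) x
      = (pd i g x * pd j g x - hess i j g x * g x) / g x ^ 2 := by
  have hd {h : (Fin n → ℝ) → ℝ} (hh : ContDiff ℝ ∞ h) (y : Fin n → ℝ) :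
      DifferentiableAt ℝ h y :=
    hh.differentiable (by simp) y
  rw [hess, show pd j (fun y => -log (g y) - c) = fun y => -(pd j g y / g y) from
      funext (pd_neg_log_sub hg hpos c j),
    pd_neg (g := fun y => pd j g y / g y) (hd ((hg.pd j).div hg fun y => (hpos y).ne') x),
    pd_div (hd (hg.pd j) x) (hd hg x) (hpos x).ne', hess]
  ring

theorem gradSq_neg_log_sub (x : Fin n → ℝ) :
    gradSq (fun y => -log (g y) - c) x = gradSq g x / g x ^ 2 := by
  simp only [gradSq, pd_neg_log_sub hg hpos c, neg_sq, div_pow, Finset.sum_div]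

theorem sum_hess_neg_log_sub_sq (x : Fin n → ℝ) :
    ∑ i, ∑ j, hess i j (fun y => -log (g y) - c) x ^ 2
      = (gradSq g x ^ 2 - 2 * g x * ∑ i, ∑ j, hess i j g x * pd i g x * pd j g x
          + g x ^ 2 * ∑ i, ∑ j, hess i j g x ^ 2) / g x ^ 4 := by
  have e (i j : Fin n) : hess i j (fun y => -log (g y) - c) x ^ 2
      = (pd i g x ^ 2 * pd j g x ^ 2 - 2 * g x * (hess i j g x * pd i g x * pd j g x)
          + g x ^ 2 * hess i j g x ^ 2) / g x ^ 4 := by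
    rw [hess_neg_log_sub hg hpos c, div_pow, ← pow_mul]
    ring
  rw [sq (gradSq g x), gradSq, Finset.sum_mul_sum]
  simp only [e, ← Finset.sum_div, Finset.sum_add_distrib, Finset.sum_sub_distrib, Finset.mul_sum]

theorem sum_hess_neg_log_sub_diag (x : Fin n → ℝ) :
    ∑ i, hess i i (fun y => -log (g y) - c) x = (gradSq g x - lap g x * g x) / g x ^ 2 := by
  simp only [hess_neg_log_sub hg hpos c, ← sq]
  rw [← Finset.sum_div, Finset.sum_sub_distrib, ← Finset.sum_mul]
  rfl

end LogPotential

section Periodic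

variable {n : ℕ} {g φ ψ : (Fin n → ℝ) → ℝ}

def IsIntPeriodic (g : (Fin n → ℝ) → ℝ) : Prop :=
  ∀ (x : Fin n → ℝ) (m : Fin n → ℤ), g (x + fun i => (m i : ℝ)) = g x

theorem IsIntPeriodic.pd (hg : IsIntPeriodic g) (i : Fin n) : IsIntPeriodic (pd i g) := by
  intro x m
  rw [_root_.pd, _root_.pd, ← fderiv_comp_add_right,
    show (fun y => g (y + fun i => (m i : ℝ))) = g from funext fun y => hg y m]

theorem IsIntPeriodic.gradSq (hg : IsIntPeriodic g) : IsIntPeriodic (gradSq g) := by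
  intro x m
  simp only [_root_.gradSq, hg.pd _ x m]

theorem IsIntPeriodic.div (hφ : IsIntPeriodic φ) (hψ : IsIntPeriodic ψ) :
    IsIntPeriodic (fun y => φ y / ψ y) := by
  intro x m
  simp only [hφ x m, hψ x m]

theorem integral_lap_eq_zero_of_isIntPeriodic (hg : ContDiff ℝ ∞ g) (hper : IsIntPeriodic g) :
    ∫ x in Set.Icc (0 : Fin n → ℝ) 1, lap g x = 0 := by
  cases n with
  | zero => simp [lap]
  | succ m =>
    have hdiv := integral_divergence_of_hasFDerivAt_off_countable' (0 : Fin (m + 1) → ℝ) 1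
      zero_le_one (fun i => pd i g) (fun i x => fderiv ℝ (pd i g) x) ∅ Set.countable_empty
      (fun i => (hg.pd i).continuous.continuousOn)
      (fun x _ i => ((hg.pd i).differentiable (by simp) x).hasFDerivAt)
      (Continuous.integrableOn_Icc (continuous_finsetSum _ fun i _ => ((hg.pd i).pd i).continuous))
    -- opposite faces of the cube differ by the lattice vector `eᵢ`
    have hface (i : Fin (m + 1)) (y : Fin m → ℝ) :
        pd i g (i.insertNth ((1 : Fin (m + 1) → ℝ) i) y)
          = pd i g (i.insertNth ((0 : Fin (m + 1) → ℝ) i) y) := by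
      have hshift : i.insertNth ((1 : Fin (m + 1) → ℝ) i) y
          = i.insertNth ((0 : Fin (m + 1) → ℝ) i) y
            + fun j => (((Pi.single i 1 : Fin (m + 1) → ℤ) j : ℝ)) := by
        funext j
        rcases eq_or_ne j i with rfl | hj
        · simp
        · obtain ⟨k, rfl⟩ := Fin.exists_succAbove_eq hj
          simp [Fin.insertNth_apply_succAbove]
      rw [hshift, hper.pd]
    simp only [hface, sub_self, Finset.sum_const_zero] at hdiv
    exact hdiv

end Periodic

section Slices

theorem HasFDerivAt.hasDerivAt_time_slice {E F : Type*} [NormedAddCommGroup E] [NormedSpace ℝ E]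
    [NormedAddCommGroup F] [NormedSpace ℝ F] {H : ℝ × E → F} {L : ℝ × E →L[ℝ] F} {t : ℝ} {x : E}
    (h : HasFDerivAt H L (t, x)) : HasDerivAt (fun s => H (s, x)) (L (1, 0)) t :=
  h.comp_hasDerivAt t ((hasDerivAt_id t).prodMk (hasDerivAt_const t x))

theorem HasFDerivAt.hasFDerivAt_space_slice {E F : Type*} [NormedAddCommGroup E]
    [NormedSpace ℝ E] [NormedAddCommGroup F] [NormedSpace ℝ F] {H : ℝ × E → F}
    {L : ℝ × E →L[ℝ] F} {t : ℝ} {x : E} (h : HasFDerivAt H L (t, x)) :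
    HasFDerivAt (fun y => H (t, y)) (L.comp (ContinuousLinearMap.inr ℝ ℝ E)) x :=
  h.comp x ((hasFDerivAt_const t x).prodMk (hasFDerivAt_id x))

variable {n : ℕ} {I : Set ℝ} {G : ℝ → (Fin n → ℝ) → ℝ} {t : ℝ}
  (hI : IsOpen I) (hG : ContDiffOn ℝ ∞ (fun p : ℝ × (Fin n → ℝ) => G p.1 p.2) (I ×ˢ Set.univ))
include hI hG

theorem hasFDerivAt_uncurry_of_mem (ht : t ∈ I) (x : Fin n → ℝ) :
    HasFDerivAt (fun p : ℝ × (Fin n → ℝ) => G p.1 p.2)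
      (fderiv ℝ (fun p : ℝ × (Fin n → ℝ) => G p.1 p.2) (t, x)) (t, x) :=
  ((hG.contDiffAt ((hI.prod isOpen_univ).mem_nhds ⟨ht, trivial⟩)).differentiableAt
    (by simp)).hasFDerivAt

theorem contDiff_slice (ht : t ∈ I) : ContDiff ℝ ∞ (G t) :=
  contDiff_iff_contDiffAt.2 fun x =>
    (hG.contDiffAt ((hI.prod isOpen_univ).mem_nhds ⟨ht, trivial⟩)).comp x
      (contDiffAt_const.prodMk contDiffAt_id)

theorem pd_slice_eq_fderiv (ht : t ∈ I) (j : Fin n) (x : Fin n → ℝ) :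
    pd j (G t) x = fderiv ℝ (fun p : ℝ × (Fin n → ℝ) => G p.1 p.2) (t, x) (0, Pi.single j 1) :=
  ((hasFDerivAt_uncurry_of_mem hI hG ht x).hasFDerivAt_space_slice).pd_eq j

theorem deriv_slice_eq_fderiv (ht : t ∈ I) (x : Fin n → ℝ) :
    deriv (fun s => G s x) t = fderiv ℝ (fun p : ℝ × (Fin n → ℝ) => G p.1 p.2) (t, x) (1, 0) :=
  ((hasFDerivAt_uncurry_of_mem hI hG ht x).hasDerivAt_time_slice).deriv

theorem contDiffOn_pd_slice (j : Fin n) :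
    ContDiffOn ℝ ∞ (fun p : ℝ × (Fin n → ℝ) => pd j (G p.1) p.2) (I ×ˢ Set.univ) :=
  ((hG.fderiv_of_isOpen (hI.prod isOpen_univ) (by simp)).clm_apply contDiffOn_const).congr
    fun p hp => pd_slice_eq_fderiv hI hG hp.1 j p.2

theorem contDiffOn_lap_slice :
    ContDiffOn ℝ ∞ (fun p : ℝ × (Fin n → ℝ) => lap (G p.1) p.2) (I ×ˢ Set.univ) :=
  ContDiffOn.sum fun i _ =>
    contDiffOn_pd_slice (G := fun s => pd i (G s)) hI (contDiffOn_pd_slice hI hG i) i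

theorem contDiffOn_gradSq_slice :
    ContDiffOn ℝ ∞ (fun p : ℝ × (Fin n → ℝ) => gradSq (G p.1) p.2) (I ×ˢ Set.univ) :=
  ContDiffOn.sum fun i _ => (contDiffOn_pd_slice hI hG i).pow 2

theorem hasDerivAt_pd_slice (ht : t ∈ I) (j : Fin n) (x : Fin n → ℝ) :
    HasDerivAt (fun s => pd j (G s) x) (pd j (fun y => deriv (fun s => G s y) t) x) t := by
  set D := fderiv ℝ (fun p : ℝ × (Fin n → ℝ) => G p.1 p.2)
  have hD : HasFDerivAt D (fderiv ℝ D (t, x)) (t, x) :=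
    (((hG.fderiv_of_isOpen (hI.prod isOpen_univ) (m := ∞) (by simp)).contDiffAt
      ((hI.prod isOpen_univ).mem_nhds ⟨ht, trivial⟩)).differentiableAt (by simp)).hasFDerivAt
  have htime : HasDerivAt (fun s => D (s, x) (0, Pi.single j 1))
      (fderiv ℝ D (t, x) (1, 0) (0, Pi.single j 1)) t := by
    simpa using hD.hasDerivAt_time_slice.clm_apply (hasDerivAt_const t (0, Pi.single j 1))
  have hspace :
      pd j (fun y => D (t, y) (1, 0)) x = fderiv ℝ D (t, x) (0, Pi.single j 1) (1, 0) := by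
    rw [(hD.hasFDerivAt_space_slice.clm_apply (hasFDerivAt_const (1, 0) x)).pd_eq]
    simp
  have hsymm : IsSymmSndFDerivAt ℝ (fun p : ℝ × (Fin n → ℝ) => G p.1 p.2) (t, x) :=
    (hG.contDiffAt ((hI.prod isOpen_univ).mem_nhds ⟨ht, trivial⟩)).isSymmSndFDerivAt
      (by simp [ENat.LEInfty.out])
  rw [show (fun y => deriv (fun s => G s y) t) = fun y => D (t, y) (1, 0) from
    funext (deriv_slice_eq_fderiv hI hG ht), hspace, ← hsymm]
  refine htime.congr_of_eventuallyEq ?_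
  filter_upwards [hI.mem_nhds ht] with s hs using pd_slice_eq_fderiv hI hG hs j x

end Slices

theorem hasDerivAt_setIntegral_of_continuousOn {E : Type*} [TopologicalSpace E] [T2Space E]
    [MeasurableSpace E] [OpensMeasurableSpace E] {μ : Measure E} [IsFiniteMeasureOnCompacts μ]
    {K : Set E} (hK : IsCompact K) {I : Set ℝ} (hI : IsOpen I) {F F' : ℝ → E → ℝ}
    (hF : ∀ s ∈ I, ContinuousOn (F s) K)
    (hF' : ContinuousOn (fun p : ℝ × E => F' p.1 p.2) (I ×ˢ K))
    (hderiv : ∀ s ∈ I, ∀ x ∈ K, HasDerivAt (fun s => F s x) (F' s x) s) {t : ℝ} (ht : t ∈ I) :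
    HasDerivAt (fun s => ∫ x in K, F s x ∂μ) (∫ x in K, F' t x ∂μ) t := by
  obtain ⟨δ, hδ, hδI⟩ := Metric.nhds_basis_closedBall.mem_iff.1 (hI.mem_nhds ht)
  obtain ⟨C, hC⟩ := ((isCompact_closedBall t δ).prod hK).exists_bound_of_continuousOn
    (hF'.mono (Set.prod_mono hδI subset_rfl))
  have hball : Metric.ball t δ ⊆ I := Metric.ball_subset_closedBall.trans hδI
  have hF't : ContinuousOn (F' t) K :=
    hF'.comp (continuous_const.prodMk continuous_id).continuousOn fun x hx => ⟨ht, hx⟩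
  refine (hasDerivAt_integral_of_dominated_loc_of_deriv_le (bound := fun _ => C)
    (Metric.ball_mem_nhds t hδ) ?_ ((hF t ht).integrableOn_compact hK)
    (hF't.aestronglyMeasurable_of_isCompact hK hK.measurableSet) ?_
    (integrableOn_const hK.measure_lt_top.ne) ?_).2
  · filter_upwards [hI.mem_nhds ht] with s hs using
      (hF s hs).aestronglyMeasurable_of_isCompact hK hK.measurableSet
  · filter_upwards [ae_restrict_mem hK.measurableSet] with x hx s hs using
      hC (s, x) ⟨Metric.ball_subset_closedBall hs, hx⟩
  · filter_upwards [ae_restrict_mem hK.measurableSet] with x hx s hs using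
      hderiv s (hball hs) x hx

section EntropyDensity

variable {n : ℕ}

/-- The integrand of `W` once the weight `(4πt)^{-n/2} e^{-v}` is recognised as `f` itself;
`entropyDensityRate` is its time derivative when `g` evolves by `∂ₜg = Δg`. -/
def entropyDensity (t : ℝ) (g : (Fin n → ℝ) → ℝ) (x : Fin n → ℝ) : ℝ :=
  t ^ 2 * (gradSq g x / g x) - 2 * n * t * g x

def entropyDensityRate (t : ℝ) (g : (Fin n → ℝ) → ℝ) (x : Fin n → ℝ) : ℝ :=
  2 * t * (gradSq g x / g x)
    + t ^ 2 * ((2 * (∑ j, pd j g x * pd j (lap g) x) * g x - gradSq g x * lap g x) / g x ^ 2)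
    - 2 * n * g x - 2 * n * t * lap g x

variable {g : (Fin n → ℝ) → ℝ} (hg : ContDiff ℝ ∞ g) (hpos : ∀ y, 0 < g y)
include hg hpos

theorem continuous_entropyDensity (t : ℝ) : Continuous (entropyDensity t g) :=
  (continuous_const.mul (hg.gradSq.continuous.div hg.continuous fun y => (hpos y).ne')).sub
    (continuous_const.mul hg.continuous)

theorem entropyDensity_eq (c t : ℝ) (x : Fin n → ℝ) :
    (t ^ 2 * gradSq (fun y => -log (g y) - c) x - 2 * n * t) * g x = entropyDensity t g x := by
  rw [gradSq_neg_log_sub hg hpos c, entropyDensity]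
  field_simp [(hpos x).ne']

theorem entropyDensityRate_eq (c : ℝ) {t : ℝ} (ht : t ≠ 0) (x : Fin n → ℝ) :
    entropyDensityRate t g x
      = -2 * t ^ 2 * ((∑ i, ∑ j, (hess i j (fun y => -log (g y) - c) x
            - (1 / t) * (if i = j then (1:ℝ) else 0)) ^ 2
          + gradSq (fun y => -log (g y) - c) x / t) * g x)
        + (t ^ 2 * lap (fun y => gradSq g y / g y) x + (4 - 2 * n) * t * lap g x) := by
  rw [sum_sq_sub_mul_ite, sum_hess_neg_log_sub_sq hg hpos c, sum_hess_neg_log_sub_diag hg hpos c,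
    gradSq_neg_log_sub hg hpos c, lap_div hg.gradSq hg (fun y => (hpos y).ne'), lap_gradSq hg,
    sum_pd_gradSq_mul_pd hg, entropyDensityRate]
  field_simp [(hpos x).ne']
  ring

theorem integral_entropyDensityRate (hper : IsIntPeriodic g) (c : ℝ) {t : ℝ} (ht : t ≠ 0) :
    ∫ x in Set.Icc (0 : Fin n → ℝ) 1, entropyDensityRate t g x
      = -2 * t ^ 2 * ∫ x in Set.Icc (0 : Fin n → ℝ) 1,
          (∑ i, ∑ j, (hess i j (fun y => -log (g y) - c) x
            - (1 / t) * (if i = j then (1:ℝ) else 0)) ^ 2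
          + gradSq (fun y => -log (g y) - c) x / t) * g x := by
  have hv : ContDiff ℝ ∞ (fun y => -log (g y) - c) :=
    (hg.log fun y => (hpos y).ne').neg.sub contDiff_const
  have hQ : ContDiff ℝ ∞ (fun y => gradSq g y / g y) := hg.gradSq.div hg fun y => (hpos y).ne'
  have hlap {h : (Fin n → ℝ) → ℝ} (hh : ContDiff ℝ ∞ h) : Continuous (lap h) :=
    continuous_finsetSum _ fun i _ => ((hh.pd i).pd i).continuous
  have hcont : Continuous fun x => (∑ i, ∑ j, (hess i j (fun y => -log (g y) - c) x
      - (1 / t) * (if i = j then (1:ℝ) else 0)) ^ 2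
      + gradSq (fun y => -log (g y) - c) x / t) * g x :=
    ((continuous_finsetSum _ fun i _ => continuous_finsetSum _ fun j _ =>
      (((hv.pd j).pd i).continuous.sub continuous_const).pow 2).add
      (hv.gradSq.continuous.div_const t)).mul hg.continuous
  have hdiv : ∫ x in Set.Icc (0 : Fin n → ℝ) 1,
      t ^ 2 * lap (fun y => gradSq g y / g y) x + (4 - 2 * n) * t * lap g x = 0 := by
    rw [integral_add ((hlap hQ).const_mul _).integrableOn_Icc
        ((hlap hg).const_mul _).integrableOn_Icc, integral_const_mul, integral_const_mul,
      integral_lap_eq_zero_of_isIntPeriodic hQ (hper.gradSq.div hper),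
      integral_lap_eq_zero_of_isIntPeriodic hg hper]
    ring
  have hrest : Continuous fun x =>
      t ^ 2 * lap (fun y => gradSq g y / g y) x + (4 - 2 * n) * t * lap g x :=
    ((hlap hQ).const_mul _).add ((hlap hg).const_mul _)
  simp only [entropyDensityRate_eq hg hpos c ht]
  rw [integral_add (hcont.const_mul _).integrableOn_Icc hrest.integrableOn_Icc, hdiv, add_zero,
    integral_const_mul]

end EntropyDensity

section HeatFlow

variable {n : ℕ} {I : Set ℝ} {f : ℝ → (Fin n → ℝ) → ℝ} {t : ℝ}
  (hI : IsOpen I) (hf : ContDiffOn ℝ ∞ (fun p : ℝ × (Fin n → ℝ) => f p.1 p.2) (I ×ˢ Set.univ))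
  (hpos : ∀ t ∈ I, ∀ x, 0 < f t x)
  (hheat : ∀ t ∈ I, ∀ x, deriv (fun s => f s x) t = lap (f t) x)
include hI hf

include hpos in
theorem continuousOn_entropyDensityRate :
    ContinuousOn (fun p : ℝ × (Fin n → ℝ) => entropyDensityRate p.1 (f p.1) p.2)
      (I ×ˢ Set.univ) := by
  have hf0 : ∀ p ∈ I ×ˢ (Set.univ : Set (Fin n → ℝ)), f p.1 p.2 ≠ 0 :=
    fun p hp => (hpos p.1 hp.1 p.2).ne'
  have hF := hf.continuousOn
  have hS := (contDiffOn_gradSq_slice hI hf).continuousOn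
  have hL := (contDiffOn_lap_slice hI hf).continuousOn
  have hP : ContinuousOn (fun p : ℝ × (Fin n → ℝ) =>
      ∑ j, pd j (f p.1) p.2 * pd j (lap (f p.1)) p.2) (I ×ˢ Set.univ) :=
    continuousOn_finsetSum _ fun j _ => (contDiffOn_pd_slice hI hf j).continuousOn.mul
      (contDiffOn_pd_slice (G := fun s => lap (f s)) hI (contDiffOn_lap_slice hI hf) j).continuousOn
  have ht := continuous_fst.continuousOn (s := I ×ˢ (Set.univ : Set (Fin n → ℝ)))
  exact ((((continuousOn_const.mul ht).mul (hS.div hF hf0)).add ((ht.pow 2).mul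
    ((((continuousOn_const.mul hP).mul hF).sub (hS.mul hL)).div (hF.pow 2)
      fun p hp => pow_ne_zero 2 (hf0 p hp)))).sub (continuousOn_const.mul hF)).sub
    ((continuousOn_const.mul ht).mul hL)

include hheat

theorem hasDerivAt_of_heat (ht : t ∈ I) (x : Fin n → ℝ) :
    HasDerivAt (fun s => f s x) (lap (f t) x) t := by
  rw [← hheat t ht x]
  exact (hasFDerivAt_uncurry_of_mem hI hf ht x).hasDerivAt_time_slice.differentiableAt.hasDerivAt

theorem hasDerivAt_gradSq_of_heat (ht : t ∈ I) (x : Fin n → ℝ) :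
    HasDerivAt (fun s => gradSq (f s) x) (2 * ∑ j, pd j (f t) x * pd j (lap (f t)) x) t := by
  have hpd (j : Fin n) : HasDerivAt (fun s => pd j (f s) x) (pd j (lap (f t)) x) t := by
    simpa only [show (fun y => deriv (fun s => f s y) t) = lap (f t) from funext (hheat t ht)]
      using hasDerivAt_pd_slice hI hf ht j x
  refine (HasDerivAt.fun_sum fun j _ => (hpd j).fun_pow 2).congr_deriv ?_
  simp only [Finset.mul_sum]
  exact Finset.sum_congr rfl fun j _ => by push_cast; ring

include hpos

theorem hasDerivAt_entropyDensity_of_heat (ht : t ∈ I) (x : Fin n → ℝ) :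
    HasDerivAt (fun s => entropyDensity s (f s) x) (entropyDensityRate t (f t) x) t := by
  have hfx := hasDerivAt_of_heat hI hf hheat ht x
  refine (((hasDerivAt_pow 2 t).mul ((hasDerivAt_gradSq_of_heat hI hf hheat ht x).fun_div hfx
    (hpos t ht x).ne')).sub (((hasDerivAt_id t).const_mul (2 * n : ℝ)).mul hfx)).congr_deriv ?_
  rw [entropyDensityRate, id]
  push_cast
  ring

theorem hasDerivAt_integral_entropyDensity_of_heat (ht : t ∈ I) :
    HasDerivAt (fun s => ∫ x in Set.Icc (0 : Fin n → ℝ) 1, entropyDensity s (f s) x)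
      (∫ x in Set.Icc (0 : Fin n → ℝ) 1, entropyDensityRate t (f t) x) t :=
  hasDerivAt_setIntegral_of_continuousOn isCompact_Icc hI
    (fun s hs => (continuous_entropyDensity (contDiff_slice hI hf hs) (hpos s hs) s).continuousOn)
    ((continuousOn_entropyDensityRate hI hf hpos).mono
      (Set.prod_mono subset_rfl (Set.subset_univ _)))
    (fun _ hs x _ => hasDerivAt_entropyDensity_of_heat hI hf hpos hheat hs x) ht

end HeatFlow

theorem rpow_neg_half_mul_exp_neg_log_sub {a A : ℝ} (ha : 0 < a) (hA : 0 < A) (N : ℝ) :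
    A ^ (-N / 2) * exp (-(-log a - N / 2 * log A)) = a := by
  rw [show -(-log a - N / 2 * log A) = log a + N / 2 * log A by ring, exp_add, exp_log ha,
    mul_comm (N / 2), ← rpow_def_of_pos hA, mul_left_comm, ← rpow_add hA, neg_div,
    neg_add_cancel, rpow_zero, mul_one]

theorem entropy_W_deriv_general
    (n : ℕ) (f : ℝ → (Fin n → ℝ) → ℝ)
    (hsmooth : ContDiffOn ℝ (⊤ : ℕ∞) (fun p : ℝ × (Fin n → ℝ) => f p.1 p.2)
      (Set.Ioi 0 ×ˢ Set.univ))
    (hpos : ∀ t > (0:ℝ), ∀ x : Fin n → ℝ, 0 < f t x)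
    (hheat : ∀ t > (0:ℝ), ∀ x : Fin n → ℝ, deriv (fun s => f s x) t = lap (f t) x)
    (hper : ∀ t > (0:ℝ), ∀ x : Fin n → ℝ, ∀ m : Fin n → ℤ,
      f t (x + fun i => (m i : ℝ)) = f t x)
    (v : ℝ → (Fin n → ℝ) → ℝ)
    (hv : ∀ t x, v t x = -Real.log (f t x) - (n / 2 : ℝ) * Real.log (4 * π * t))
    (W : ℝ → ℝ)
    (hW : ∀ t, W t = ∫ x in Set.Icc (0 : Fin n → ℝ) 1,
      (t ^ 2 * gradSq (v t) x - 2 * n * t) *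
        ((4 * π * t) ^ (-(n : ℝ) / 2) * Real.exp (-(v t x)))) :
    ∀ t > (0:ℝ),
      HasDerivAt W
        (-2 * t ^ 2 * ∫ x in Set.Icc (0 : Fin n → ℝ) 1,
          ((∑ i, ∑ j, (hess i j (v t) x - (1 / t) * (if i = j then (1:ℝ) else 0)) ^ 2)
            + gradSq (v t) x / t) *
            ((4 * π * t) ^ (-(n : ℝ) / 2) * Real.exp (-(v t x)))) t ∧
      (-2 * t ^ 2 * ∫ x in Set.Icc (0 : Fin n → ℝ) 1,
          ((∑ i, ∑ j, (hess i j (v t) x - (1 / t) * (if i = j then (1:ℝ) else 0)) ^ 2)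
            + gradSq (v t) x / t) *
            ((4 * π * t) ^ (-(n : ℝ) / 2) * Real.exp (-(v t x)))) ≤ 0 := by
  intro t ht
  have hslice {s : ℝ} (hs : 0 < s) : ContDiff ℝ ∞ (f s) := contDiff_slice isOpen_Ioi hsmooth hs
  have hvs (s : ℝ) : v s = fun y => -log (f s y) - (n / 2 : ℝ) * log (4 * π * s) := funext (hv s)
  have hweight : ∀ s > 0, ∀ x, (4 * π * s) ^ (-(n : ℝ) / 2) * exp (-(v s x)) = f s x :=
    fun s hs x => by
      rw [hv]
      exact rpow_neg_half_mul_exp_neg_log_sub (hpos s hs x) (by positivity) _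
  have hW' : W =ᶠ[𝓝 t] fun s => ∫ x in Set.Icc (0 : Fin n → ℝ) 1, entropyDensity s (f s) x := by
    filter_upwards [lt_mem_nhds ht] with s hs
    simp only [hW, hweight s hs]
    simp only [hvs s, entropyDensity_eq (hslice hs) (hpos s hs)]
  have hrate : ∫ x in Set.Icc (0 : Fin n → ℝ) 1, entropyDensityRate t (f t) x
      = -2 * t ^ 2 * ∫ x in Set.Icc (0 : Fin n → ℝ) 1,
          ((∑ i, ∑ j, (hess i j (v t) x - (1 / t) * (if i = j then (1:ℝ) else 0)) ^ 2)
            + gradSq (v t) x / t) * ((4 * π * t) ^ (-(n : ℝ) / 2) * exp (-(v t x))) := by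
    simp only [hweight t ht]
    rw [hvs t]
    exact integral_entropyDensityRate (hslice ht) (hpos t ht) (hper t ht) _ ht.ne'
  refine ⟨hrate ▸ (hasDerivAt_integral_entropyDensity_of_heat isOpen_Ioi hsmooth hpos hheat ht)
    |>.congr_of_eventuallyEq hW', mul_nonpos_of_nonpos_of_nonneg (by nlinarith) ?_⟩
  refine setIntegral_nonneg measurableSet_Icc fun x _ => mul_nonneg ?_ (by positivity)
  exact add_nonneg (Finset.sum_nonneg fun i _ => Finset.sum_nonneg fun j _ => sq_nonneg _)
    (div_nonneg (gradSq_nonneg _ _) ht.le)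

/-- Derivative formula for the entropy `W`:
`dW/dt = −2t² ∫ (|∇²v − (1/t)I|² + |∇v|²/t) (4πt)^{−n/2} e^{−v} ≤ 0`. -/
theorem entropy_W_deriv
    (n : ℕ) (hn : 1 ≤ n) (f : ℝ → (Fin n → ℝ) → ℝ)
    (hsmooth : ContDiffOn ℝ (⊤ : ℕ∞) (fun p : ℝ × (Fin n → ℝ) => f p.1 p.2)
      (Set.Ioi 0 ×ˢ Set.univ))
    (hpos : ∀ t > (0:ℝ), ∀ x : Fin n → ℝ, 0 < f t x)
    (hheat : ∀ t > (0:ℝ), ∀ x : Fin n → ℝ, deriv (fun s => f s x) t = lap (f t) x)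
    (hper : ∀ t > (0:ℝ), ∀ x : Fin n → ℝ, ∀ m : Fin n → ℤ,
      f t (x + fun i => (m i : ℝ)) = f t x)
    (v : ℝ → (Fin n → ℝ) → ℝ)
    (hv : ∀ t x, v t x = -Real.log (f t x) - (n / 2 : ℝ) * Real.log (4 * π * t))
    (W : ℝ → ℝ)
    (hW : ∀ t, W t = ∫ x in Set.Icc (0 : Fin n → ℝ) 1,
      (t ^ 2 * gradSq (v t) x - 2 * n * t) *
        ((4 * π * t) ^ (-(n : ℝ) / 2) * Real.exp (-(v t x)))) :
    ∀ t > (0:ℝ),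
      HasDerivAt W
        (-2 * t ^ 2 * ∫ x in Set.Icc (0 : Fin n → ℝ) 1,
          ((∑ i, ∑ j, (hess i j (v t) x - (1 / t) * (if i = j then (1:ℝ) else 0)) ^ 2)
            + gradSq (v t) x / t) *
            ((4 * π * t) ^ (-(n : ℝ) / 2) * Real.exp (-(v t x)))) t ∧
      (-2 * t ^ 2 * ∫ x in Set.Icc (0 : Fin n → ℝ) 1,
          ((∑ i, ∑ j, (hess i j (v t) x - (1 / t) * (if i = j then (1:ℝ) else 0)) ^ 2)
            + gradSq (v t) x / t) *
            ((4 * π * t) ^ (-(n : ℝ) / 2) * Real.exp (-(v t x)))) ≤ 0 :=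
  entropy_W_deriv_general n f hsmooth hpos hheat hper v hv W hW
end
end

section
/- Let n ≥ 1 and let f : (−∞,0) × ℝⁿ → ℝ be a smooth positive solution of the backward heat equation ∂f/∂t = −Δf that is ℤⁿ-periodic in the space variable. Set τ = −t > 0 and u = −ln f. Then 2Δu − |∇u|² − 2n/τ ≤ 0 for all τ > 0 and all x ∈ ℝⁿ. -/
/-!
Put `v = -log f` and `τ = -t`. Then `v` solves `∂ₜv = -Δv + |∇v|²`, and Bochner's formula turns
this into `∂ₜF = -ΔF + 2⟨∇v, ∇F⟩ + 2|∇²v|²` for `F = 2Δv - |∇v|²`. For `ε > 0`, periodicity lets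
`(τ - ε) F` attain its maximum over `τ ∈ [ε, τ₀]`, `x ∈ ℝⁿ`. At a maximum point with `τ > ε`, we
have `∇F = 0`, `ΔF ≤ 0` and `∂_τ((τ - ε) F) ≥ 0`, which give `F ≥ 2(τ - ε)|∇²v|²`. Together with
`|∇²v|² ≥ (Δv)²/n ≥ F²/(4n)` this gives `(τ - ε) F ≤ 2n`. Let `ε → 0`.
-/

open MeasureTheory Real

noncomputable section

open Set Filter Topology
open scoped ContDiff

section DirDeriv

variable {E : Type*} [NormedAddCommGroup E] [NormedSpace ℝ E]

def dirDeriv (w : E) (g : E → ℝ) : E → ℝ := fun p => fderiv ℝ g p w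

variable {U : Set E} {f g : E → ℝ} {p w w' : E}

theorem HasFDerivAt.dirDeriv_eq {L : E →L[ℝ] ℝ} (h : HasFDerivAt g L p) :
    dirDeriv w g p = L w := by
  rw [dirDeriv, h.fderiv]

theorem ContDiffOn.differentiableAt_of_isOpen {F : Type*} [NormedAddCommGroup F]
    [NormedSpace ℝ F] {g : E → F} (hg : ContDiffOn ℝ ∞ g U) (hU : IsOpen U) (hp : p ∈ U) :
    DifferentiableAt ℝ g p :=
  (hg.differentiableOn (by simp)).differentiableAt (hU.mem_nhds hp)

theorem ContDiffOn.dirDeriv (hg : ContDiffOn ℝ ∞ g U) (hU : IsOpen U) (w : E) :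
    ContDiffOn ℝ ∞ (dirDeriv w g) U :=
  (ContinuousLinearMap.apply ℝ ℝ w).contDiff.comp_contDiffOn
    (hg.fderiv_of_isOpen hU (by simp))

theorem dirDeriv_congr (hU : IsOpen U) (h : EqOn f g U) : EqOn (dirDeriv w f) (dirDeriv w g) U :=
  fun _ hp => by
    rw [dirDeriv, dirDeriv, (eventuallyEq_of_mem (hU.mem_nhds hp) h).fderiv_eq]

theorem dirDeriv_comm (hg : ContDiffOn ℝ ∞ g U) (hU : IsOpen U) :
    EqOn (dirDeriv w (dirDeriv w' g)) (dirDeriv w' (dirDeriv w g)) U := by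
  intro p hp
  have hsymm : IsSymmSndFDerivAt ℝ g p :=
    (hg.contDiffAt (hU.mem_nhds hp)).isSymmSndFDerivAt (by simpa using ENat.LEInfty.out)
  have hg' : DifferentiableAt ℝ (fderiv ℝ g) p :=
    (hg.fderiv_of_isOpen hU (m := ∞) (by simp)).differentiableAt_of_isOpen hU hp
  have key : ∀ v v' : E, dirDeriv v (dirDeriv v' g) p = fderiv ℝ (fderiv ℝ g) p v v' :=
    fun v v' => by
      change fderiv ℝ (fun q => fderiv ℝ g q v') p v = _
      rw [fderiv_clm_apply hg' (differentiableAt_const v')]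
      simp
  rw [key, key, hsymm]

theorem dirDeriv_comp_add_right (c : E) :
    dirDeriv w (fun q => g (q + c)) = fun q => dirDeriv w g (q + c) := by
  ext q
  simp only [dirDeriv, fderiv_comp_add_right]

theorem dirDeriv_add (hf : DifferentiableAt ℝ f p) (hg : DifferentiableAt ℝ g p) :
    dirDeriv w (fun q => f q + g q) p = dirDeriv w f p + dirDeriv w g p := by
  simp [dirDeriv, fderiv_fun_add hf hg]

theorem dirDeriv_sub (hf : DifferentiableAt ℝ f p) (hg : DifferentiableAt ℝ g p) :
    dirDeriv w (fun q => f q - g q) p = dirDeriv w f p - dirDeriv w g p := by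
  simp [dirDeriv, fderiv_fun_sub hf hg]

theorem dirDeriv_neg : dirDeriv w (fun q => -g q) = fun q => -dirDeriv w g q := by
  ext q
  simp [dirDeriv, fderiv_fun_neg]

theorem dirDeriv_const_mul (c : ℝ) (hg : DifferentiableAt ℝ g p) :
    dirDeriv w (fun q => c * g q) p = c * dirDeriv w g p := by
  simp [dirDeriv, fderiv_const_mul hg]

theorem dirDeriv_mul (hf : DifferentiableAt ℝ f p) (hg : DifferentiableAt ℝ g p) :
    dirDeriv w (fun q => f q * g q) p = f p * dirDeriv w g p + g p * dirDeriv w f p := by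
  simp [dirDeriv, fderiv_fun_mul hf hg]

theorem dirDeriv_sum {ι : Type*} {s : Finset ι} {g : ι → E → ℝ}
    (hg : ∀ i ∈ s, DifferentiableAt ℝ (g i) p) :
    dirDeriv w (fun q => ∑ i ∈ s, g i q) p = ∑ i ∈ s, dirDeriv w (g i) p := by
  simp [dirDeriv, fderiv_fun_sum hg]

theorem dirDeriv_sq (hg : DifferentiableAt ℝ g p) :
    dirDeriv w (fun q => g q ^ 2) p = 2 * g p * dirDeriv w g p := by
  simp only [sq, dirDeriv_mul hg hg]
  ring

theorem dirDeriv_neg_log (hg : DifferentiableAt ℝ g p) (hpos : 0 < g p) :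
    dirDeriv w (fun q => -Real.log (g q)) p = -dirDeriv w g p / g p := by
  rw [(hg.hasFDerivAt.log hpos.ne').fun_neg.dirDeriv_eq]
  simp [dirDeriv, div_eq_inv_mul]

end DirDeriv

section Frame

variable {E : Type*} [NormedAddCommGroup E] [NormedSpace ℝ E] {ι : Type*} [Fintype ι]

variable (e : ι → E)

/- Derivatives along a finite family `e` of vectors: for `e = spaceFrame n`, the coordinate
directions `(0, Pi.single i 1)` of `ℝ × ℝⁿ`, these are the spatial `Δ`, `|∇·|²` and `|∇²·|²`. -/
def frameLap (g : E → ℝ) : E → ℝ := fun p => ∑ i, dirDeriv (e i) (dirDeriv (e i) g) p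

def frameGradSq (g : E → ℝ) : E → ℝ := fun p => ∑ i, dirDeriv (e i) g p ^ 2

def frameHessSq (g : E → ℝ) : E → ℝ :=
  fun p => ∑ i, ∑ j, dirDeriv (e i) (dirDeriv (e j) g) p ^ 2

def harnackQuantity (g : E → ℝ) : E → ℝ := fun p => 2 * frameLap e g p - frameGradSq e g p

variable {e} {U : Set E} {f g : E → ℝ} {p w τ : E}

theorem ContDiffOn.frameLap (hg : ContDiffOn ℝ ∞ g U) (hU : IsOpen U) :
    ContDiffOn ℝ ∞ (frameLap e g) U :=
  ContDiffOn.sum fun _ _ => (hg.dirDeriv hU _).dirDeriv hU _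

theorem ContDiffOn.frameGradSq (hg : ContDiffOn ℝ ∞ g U) (hU : IsOpen U) :
    ContDiffOn ℝ ∞ (frameGradSq e g) U :=
  ContDiffOn.sum fun _ _ => (hg.dirDeriv hU _).pow 2

theorem ContDiffOn.harnackQuantity (hg : ContDiffOn ℝ ∞ g U) (hU : IsOpen U) :
    ContDiffOn ℝ ∞ (harnackQuantity e g) U :=
  (contDiffOn_const.mul (hg.frameLap hU)).sub (hg.frameGradSq hU)

theorem frameLap_congr (hU : IsOpen U) (h : EqOn f g U) : EqOn (frameLap e f) (frameLap e g) U :=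
  fun _ hp => Finset.sum_congr rfl fun _ _ => dirDeriv_congr hU (dirDeriv_congr hU h) hp

theorem harnackQuantity_congr (hU : IsOpen U) (h : EqOn f g U) :
    EqOn (harnackQuantity e f) (harnackQuantity e g) U := fun _ hp => by
  simp only [harnackQuantity, frameLap_congr hU h hp, frameGradSq, dirDeriv_congr hU h hp]

theorem harnackQuantity_comp_add_right (c : E) :
    harnackQuantity e (fun q => g (q + c)) = fun q => harnackQuantity e g (q + c) := by
  ext q
  simp only [harnackQuantity, frameLap, frameGradSq, dirDeriv_comp_add_right]

theorem frameLap_neg : frameLap e (fun q => -g q) = fun q => -frameLap e g q := by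
  ext q
  simp [frameLap, dirDeriv_neg]

theorem frameLap_add (hf : ContDiffOn ℝ ∞ f U) (hg : ContDiffOn ℝ ∞ g U) (hU : IsOpen U) :
    EqOn (frameLap e (fun q => f q + g q)) (fun q => frameLap e f q + frameLap e g q) U := by
  intro p hp
  simp only [frameLap, ← Finset.sum_add_distrib]
  refine Finset.sum_congr rfl fun i _ => ?_
  rw [dirDeriv_congr hU (fun q hq => dirDeriv_add (hf.differentiableAt_of_isOpen hU hq)
    (hg.differentiableAt_of_isOpen hU hq)) hp]
  exact dirDeriv_add ((hf.dirDeriv hU _).differentiableAt_of_isOpen hU hp)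
    ((hg.dirDeriv hU _).differentiableAt_of_isOpen hU hp)

theorem frameLap_sub (hf : ContDiffOn ℝ ∞ f U) (hg : ContDiffOn ℝ ∞ g U) (hU : IsOpen U) :
    EqOn (frameLap e (fun q => f q - g q)) (fun q => frameLap e f q - frameLap e g q) U := by
  intro p hp
  simp only [frameLap, ← Finset.sum_sub_distrib]
  refine Finset.sum_congr rfl fun i _ => ?_
  rw [dirDeriv_congr hU (fun q hq => dirDeriv_sub (hf.differentiableAt_of_isOpen hU hq)
    (hg.differentiableAt_of_isOpen hU hq)) hp]
  exact dirDeriv_sub ((hf.dirDeriv hU _).differentiableAt_of_isOpen hU hp)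
    ((hg.dirDeriv hU _).differentiableAt_of_isOpen hU hp)

theorem frameLap_const_mul (c : ℝ) (hg : ContDiffOn ℝ ∞ g U) (hU : IsOpen U) :
    EqOn (frameLap e (fun q => c * g q)) (fun q => c * frameLap e g q) U := by
  intro p hp
  simp only [frameLap, Finset.mul_sum]
  refine Finset.sum_congr rfl fun i _ => ?_
  rw [dirDeriv_congr hU (fun q hq => dirDeriv_const_mul c (hg.differentiableAt_of_isOpen hU hq)) hp]
  exact dirDeriv_const_mul c ((hg.dirDeriv hU _).differentiableAt_of_isOpen hU hp)

theorem dirDeriv_frameGradSq (hg : ContDiffOn ℝ ∞ g U) (hU : IsOpen U) (hp : p ∈ U) :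
    dirDeriv w (frameGradSq e g) p =
      2 * ∑ i, dirDeriv (e i) g p * dirDeriv w (dirDeriv (e i) g) p := by
  have hd : ∀ i, DifferentiableAt ℝ (dirDeriv (e i) g) p :=
    fun i => (hg.dirDeriv hU _).differentiableAt_of_isOpen hU hp
  unfold frameGradSq
  rw [dirDeriv_sum fun i _ => (hd i).fun_pow 2, Finset.mul_sum]
  exact Finset.sum_congr rfl fun i _ => by rw [dirDeriv_sq (hd i)]; ring

theorem dirDeriv_frameLap (hg : ContDiffOn ℝ ∞ g U) (hU : IsOpen U) :
    EqOn (dirDeriv w (frameLap e g)) (frameLap e (dirDeriv w g)) U := by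
  intro p hp
  unfold frameLap
  rw [dirDeriv_sum fun i _ =>
    ((hg.dirDeriv hU _).dirDeriv hU _).differentiableAt_of_isOpen hU hp]
  refine Finset.sum_congr rfl fun i _ => ?_
  rw [dirDeriv_comm (hg.dirDeriv hU _) hU hp, dirDeriv_congr hU (dirDeriv_comm hg hU) hp]

/-- Bochner's formula for a flat metric. -/
theorem frameLap_frameGradSq (hg : ContDiffOn ℝ ∞ g U) (hU : IsOpen U) :
    EqOn (frameLap e (frameGradSq e g)) (fun p => 2 * frameHessSq e g p +
      2 * ∑ k, dirDeriv (e k) g p * dirDeriv (e k) (frameLap e g) p) U := by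
  intro p hp
  have hd : ∀ {h : E → ℝ}, ContDiffOn ℝ ∞ h U → DifferentiableAt ℝ h p :=
    fun hh => hh.differentiableAt_of_isOpen hU hp
  have h1 (i : ι) : dirDeriv (e i) (dirDeriv (e i) (frameGradSq e g)) p =
      2 * ∑ k, (dirDeriv (e k) g p * dirDeriv (e i) (dirDeriv (e i) (dirDeriv (e k) g)) p +
        dirDeriv (e i) (dirDeriv (e k) g) p ^ 2) := by
    rw [dirDeriv_congr hU (fun q hq => dirDeriv_frameGradSq hg hU hq) hp,
      dirDeriv_const_mul _ (DifferentiableAt.fun_sum fun k _ =>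
        (hd (hg.dirDeriv hU _)).fun_mul (hd ((hg.dirDeriv hU _).dirDeriv hU _))),
      dirDeriv_sum fun k _ =>
        (hd (hg.dirDeriv hU _)).fun_mul (hd ((hg.dirDeriv hU _).dirDeriv hU _))]
    congr 1
    exact Finset.sum_congr rfl fun k _ => by
      rw [dirDeriv_mul (hd (hg.dirDeriv hU _)) (hd ((hg.dirDeriv hU _).dirDeriv hU _))]; ring
  have h2 (k : ι) : dirDeriv (e k) (frameLap e g) p =
      ∑ i, dirDeriv (e i) (dirDeriv (e i) (dirDeriv (e k) g)) p :=
    dirDeriv_frameLap hg hU hp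
  simp only [frameLap, h1, frameHessSq, h2, Finset.mul_sum, Finset.sum_add_distrib, mul_add]
  rw [add_comm]
  exact congrArg _ Finset.sum_comm

theorem dirDeriv_harnackQuantity {v : E → ℝ} (hv : ContDiffOn ℝ ∞ v U) (hU : IsOpen U)
    (hPDE : EqOn (dirDeriv τ v) (fun q => -frameLap e v q + frameGradSq e v q) U) :
    EqOn (dirDeriv τ (harnackQuantity e v)) (fun p => -frameLap e (harnackQuantity e v) p +
      2 * ∑ i, dirDeriv (e i) v p * dirDeriv (e i) (harnackQuantity e v) p +
      2 * frameHessSq e v p) U := by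
  intro p hp
  have hL := hv.frameLap (e := e) hU
  have hS := hv.frameGradSq (e := e) hU
  have hd : ∀ {h : E → ℝ}, ContDiffOn ℝ ∞ h U → DifferentiableAt ℝ h p :=
    fun hh => hh.differentiableAt_of_isOpen hU hp
  have hDF (w : E) : dirDeriv w (harnackQuantity e v) p =
      2 * dirDeriv w (frameLap e v) p - dirDeriv w (frameGradSq e v) p := by
    unfold harnackQuantity
    rw [dirDeriv_sub ((hd hL).const_mul 2) (hd hS), dirDeriv_const_mul 2 (hd hL)]
  have hLt : dirDeriv τ (frameLap e v) p =
      -frameLap e (frameLap e v) p + frameLap e (frameGradSq e v) p := by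
    rw [dirDeriv_frameLap hv hU hp, frameLap_congr hU hPDE hp, frameLap_add hL.neg hS hU hp,
      frameLap_neg]
  have hSt : dirDeriv τ (frameGradSq e v) p = 2 * ∑ i, dirDeriv (e i) v p *
      (-dirDeriv (e i) (frameLap e v) p + dirDeriv (e i) (frameGradSq e v) p) := by
    rw [dirDeriv_frameGradSq hv hU hp]
    congr 1
    refine Finset.sum_congr rfl fun i _ => ?_
    rw [dirDeriv_comm hv hU hp, dirDeriv_congr hU hPDE hp, dirDeriv_add (hd hL.neg) (hd hS),
      dirDeriv_neg]
  have hΔF : frameLap e (harnackQuantity e v) p =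
      2 * frameLap e (frameLap e v) p - frameLap e (frameGradSq e v) p := by
    unfold harnackQuantity
    simp only [frameLap_sub (contDiffOn_const.mul hL) hS hU hp, frameLap_const_mul 2 hL hU hp]
  have e1 (a b c : ι → ℝ) : ∑ i, a i * (-b i + c i) = -∑ i, a i * b i + ∑ i, a i * c i := by
    simp only [mul_add, mul_neg, Finset.sum_add_distrib, Finset.sum_neg_distrib]
  have e2 (a b c : ι → ℝ) :
      ∑ i, a i * (2 * b i - c i) = 2 * ∑ i, a i * b i - ∑ i, a i * c i := by
    simp only [mul_sub, Finset.sum_sub_distrib, Finset.mul_sum, mul_left_comm (2 : ℝ)]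
  dsimp only
  rw [hDF, hLt, hSt, hΔF, frameLap_frameGradSq hv hU hp]
  simp only [hDF, e1, e2]
  ring

/-- Hopf–Cole transform. -/
theorem dirDeriv_neg_log_of_heat {f : E → ℝ} (hf : ContDiffOn ℝ ∞ f U) (hU : IsOpen U)
    (hpos : ∀ q ∈ U, 0 < f q) (hheat : EqOn (dirDeriv τ f) (fun q => -frameLap e f q) U) :
    EqOn (dirDeriv τ (fun q => -Real.log (f q)))
      (fun q => -frameLap e (fun q => -Real.log (f q)) q +
        frameGradSq e (fun q => -Real.log (f q)) q) U := by
  set v := fun q => -Real.log (f q)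
  have hv : ContDiffOn ℝ ∞ v U := (hf.log fun q hq => (hpos q hq).ne').neg
  have hprod (w : E) : EqOn (fun q => f q * dirDeriv w v q) (fun q => -dirDeriv w f q) U :=
    fun q hq => by
      simp only [v, dirDeriv_neg_log (hf.differentiableAt_of_isOpen hU hq) (hpos q hq)]
      field_simp [(hpos q hq).ne']
  intro p hp
  -- differentiate the product identity `f ∂v = -∂f` rather than the quotient `∂v = -∂f / f`
  have hsecond (i : ι) : dirDeriv (e i) (dirDeriv (e i) f) p =
      f p * (dirDeriv (e i) v p ^ 2 - dirDeriv (e i) (dirDeriv (e i) v) p) := by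
    have h2 := dirDeriv_congr hU (hprod (e i)) hp (w := e i)
    rw [dirDeriv_mul (hf.differentiableAt_of_isOpen hU hp)
      ((hv.dirDeriv hU _).differentiableAt_of_isOpen hU hp),
      dirDeriv_neg (g := dirDeriv (e i) f)] at h2
    linear_combination h2 - dirDeriv (e i) v p * hprod (e i) hp
  apply mul_left_cancel₀ (hpos p hp).ne'
  calc f p * dirDeriv τ v p = -dirDeriv τ f p := hprod τ hp
    _ = frameLap e f p := by rw [hheat hp, neg_neg]
    _ = _ := by
      simp only [frameLap, frameGradSq, hsecond, ← Finset.mul_sum, Finset.sum_sub_distrib]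
      ring

end Frame

theorem IsLocalMax.deriv_deriv_nonpos {φ : ℝ → ℝ} {a : ℝ} (h : IsLocalMax φ a)
    (hc : ContinuousAt φ a) : deriv (deriv φ) a ≤ 0 := by
  by_contra! hpos
  -- then `a` is also a local minimum, so `φ` is locally constant
  have hconst : φ =ᶠ[𝓝 a] fun _ => φ a :=
    (h.and (isLocalMin_of_deriv_deriv_pos hpos h.deriv_eq_zero hc)).mono
      fun _ hx => le_antisymm hx.1 hx.2
  have : deriv (deriv φ) a = 0 := by simp [hconst.deriv.deriv_eq]
  linarith

section Extremum

variable {E : Type*} [NormedAddCommGroup E] [NormedSpace ℝ E] {U s : Set E} {g : E → ℝ}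
  {p w : E}

theorem hasDerivAt_dirDeriv_line {r : ℝ} (hg : DifferentiableAt ℝ g (p + r • w)) :
    HasDerivAt (fun s : ℝ => g (p + s • w)) (dirDeriv w g (p + r • w)) r :=
  hg.hasFDerivAt.comp_hasDerivAt r (by simpa using ((hasDerivAt_id r).smul_const w).const_add p)

theorem dirDeriv_nonpos_of_isMaxOn (hmax : IsMaxOn g s p) (hg : DifferentiableAt ℝ g p)
    (hw : ∀ᶠ r in 𝓝[>] (0 : ℝ), p + r • w ∈ s) : dirDeriv w g p ≤ 0 :=
  hmax.localize.hasFDerivWithinAt_nonpos hg.hasFDerivAt.hasFDerivWithinAt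
    (mem_posTangentConeAt_of_frequently_mem hw.frequently)

theorem dirDeriv_eq_zero_of_isLocalMax_line (hg : DifferentiableAt ℝ g p)
    (hmax : IsLocalMax (fun r : ℝ => g (p + r • w)) 0) : dirDeriv w g p = 0 := by
  simpa using hmax.hasDerivAt_eq_zero (hasDerivAt_dirDeriv_line (r := 0) (by simpa using hg))

theorem dirDeriv_dirDeriv_nonpos_of_isLocalMax_line (hg : ContDiffOn ℝ ∞ g U) (hU : IsOpen U)
    (hp : p ∈ U) (hmax : IsLocalMax (fun r : ℝ => g (p + r • w)) 0) :
    dirDeriv w (dirDeriv w g) p ≤ 0 := by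
  have hline : ∀ᶠ r in 𝓝 (0 : ℝ), p + r • w ∈ U :=
    (continuous_const.add (continuous_id.smul continuous_const)).continuousAt.preimage_mem_nhds
      (by simpa using hU.mem_nhds hp)
  have hderiv : deriv (fun r : ℝ => g (p + r • w)) =ᶠ[𝓝 0] fun r => dirDeriv w g (p + r • w) :=
    hline.mono fun r hr => (hasDerivAt_dirDeriv_line (hg.differentiableAt_of_isOpen hU hr)).deriv
  have hp0 : p + (0 : ℝ) • w ∈ U := by simpa using hp
  have h2 := hmax.deriv_deriv_nonpos
    (hasDerivAt_dirDeriv_line (hg.differentiableAt_of_isOpen hU hp0)).continuousAt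
  rwa [hderiv.deriv_eq, (hasDerivAt_dirDeriv_line
    ((hg.dirDeriv hU w).differentiableAt_of_isOpen hU hp0)).deriv, zero_smul, add_zero] at h2

end Extremum

theorem exists_isMaxOn_prod_univ_of_periodic {n : ℕ} {s : Set ℝ} (hs : IsCompact s)
    (hne : s.Nonempty) {g : ℝ × (Fin n → ℝ) → ℝ} (hg : ContinuousOn g (s ×ˢ univ))
    (hper : ∀ t ∈ s, ∀ x (m : Fin n → ℤ), g (t, x + fun i => (m i : ℝ)) = g (t, x)) :
    ∃ p ∈ s ×ˢ univ, IsMaxOn g (s ×ˢ univ) p := by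
  obtain ⟨p, hp, hmax⟩ := (hs.prod (isCompact_Icc (a := 0) (b := 1))).exists_isMaxOn
    (hne.prod (nonempty_Icc.2 zero_le_one)) (hg.mono (prod_mono subset_rfl (subset_univ _)))
  refine ⟨p, ⟨hp.1, trivial⟩, fun ⟨t, x⟩ ⟨ht, _⟩ => ?_⟩
  have hx : x = (fun i => Int.fract (x i)) + fun i => ((⌊x i⌋ : ℤ) : ℝ) := by
    ext i; exact (Int.fract_add_floor (x i)).symm
  change g (t, x) ≤ g p
  rw [hx, hper t ht]
  exact hmax ⟨ht, fun i => Int.fract_nonneg _, fun i => (Int.fract_lt_one _).le⟩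

theorem sq_sum_diag_le_card_mul_sum_sq {ι : Type*} [Fintype ι] (A : ι → ι → ℝ) :
    (∑ i, A i i) ^ 2 ≤ Fintype.card ι * ∑ i, ∑ j, A i j ^ 2 := by
  calc (∑ i, A i i) ^ 2 ≤ Fintype.card ι * ∑ i, A i i ^ 2 := by
        simpa using sq_sum_le_card_mul_sum_sq (s := Finset.univ) (f := fun i => A i i)
    _ ≤ Fintype.card ι * ∑ i, ∑ j, A i j ^ 2 := by
        gcongr with i
        exact Finset.single_le_sum (f := fun j => A i j ^ 2) (fun _ _ => sq_nonneg _)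
          (Finset.mem_univ i)

section ProdSpace

variable {F : Type*} [NormedAddCommGroup F] [NormedSpace ℝ F] {ι : Type*} [Fintype ι]
  {e : ι → F} {U : Set (ℝ × F)} {g : ℝ × F → ℝ} {t : ℝ} {y : F}

theorem dirDeriv_slice (hg : DifferentiableAt ℝ g (t, y)) (w : F) :
    dirDeriv w (fun y => g (t, y)) y = dirDeriv ((0 : ℝ), w) g (t, y) := by
  rw [HasFDerivAt.dirDeriv_eq (g := fun y => g (t, y))
    (hg.hasFDerivAt.comp y (hasFDerivAt_prodMk_right t y))]
  simp [dirDeriv]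

theorem deriv_slice (hg : DifferentiableAt ℝ g (t, y)) :
    deriv (fun s => g (s, y)) t = dirDeriv ((1 : ℝ), (0 : F)) g (t, y) :=
  (hg.hasFDerivAt.comp_hasDerivAt t ((hasDerivAt_id t).prodMk (hasDerivAt_const t y))).deriv

theorem frameLap_slice (hg : ContDiffOn ℝ ∞ g U) (hU : IsOpen U) (ht : ∀ y, (t, y) ∈ U) (y : F) :
    frameLap e (fun y => g (t, y)) y = frameLap (fun i => ((0 : ℝ), e i)) g (t, y) := by
  have h1 (i : ι) :
      dirDeriv (e i) (fun y => g (t, y)) = fun y => dirDeriv ((0 : ℝ), e i) g (t, y) :=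
    funext fun y => dirDeriv_slice (hg.differentiableAt_of_isOpen hU (ht y)) _
  simp only [frameLap, h1]
  exact Finset.sum_congr rfl fun i _ =>
    dirDeriv_slice ((hg.dirDeriv hU _).differentiableAt_of_isOpen hU (ht y)) _

theorem frameGradSq_slice (hg : DifferentiableAt ℝ g (t, y)) :
    frameGradSq e (fun y => g (t, y)) y = frameGradSq (fun i => ((0 : ℝ), e i)) g (t, y) := by
  simp only [frameGradSq, dirDeriv_slice hg]

theorem harnackQuantity_slice (hg : ContDiffOn ℝ ∞ g U) (hU : IsOpen U) (ht : ∀ y, (t, y) ∈ U)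
    (y : F) : harnackQuantity e (fun y => g (t, y)) y =
      harnackQuantity (fun i => ((0 : ℝ), e i)) g (t, y) := by
  rw [harnackQuantity, frameLap_slice hg hU ht,
    frameGradSq_slice (hg.differentiableAt_of_isOpen hU (ht y)), harnackQuantity]

theorem dirDeriv_weight_mul {q w : ℝ × F} (ε : ℝ) (hg : DifferentiableAt ℝ g q) :
    dirDeriv w (fun q => (-q.1 - ε) * g q) q = (-q.1 - ε) * dirDeriv w g q - w.1 * g q := by
  have hweight : HasFDerivAt (fun q : ℝ × F => -q.1 - ε) (-ContinuousLinearMap.fst ℝ ℝ F) q :=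
    hasFDerivAt_fst.neg.sub_const ε
  rw [dirDeriv_mul hweight.differentiableAt hg, hweight.dirDeriv_eq]
  simp only [neg_apply, ContinuousLinearMap.coe_fst']
  ring

end ProdSpace

section MaximumPrinciple

abbrev lowerHalfSpace (n : ℕ) : Set (ℝ × (Fin n → ℝ)) := Iio 0 ×ˢ univ

def spaceFrame (n : ℕ) : Fin n → ℝ × (Fin n → ℝ) := fun i => ((0 : ℝ), Pi.single i 1)

variable {n : ℕ} {ι : Type*} [Fintype ι] {e : ι → ℝ × (Fin n → ℝ)} {v Φ : ℝ × (Fin n → ℝ) → ℝ}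

theorem isOpen_lowerHalfSpace : IsOpen (lowerHalfSpace n) := isOpen_Iio.prod isOpen_univ

theorem derivative_tests_of_isMaxOn (he : ∀ i, (e i).1 = 0)
    (hΦ : ContDiffOn ℝ ∞ Φ (lowerHalfSpace n)) {t₀ ε : ℝ} {p : ℝ × (Fin n → ℝ)}
    (hp : p ∈ Icc t₀ (-ε) ×ˢ univ) (hpε : p.1 < -ε) (hε : 0 < ε)
    (hmax : IsMaxOn (fun q => (-q.1 - ε) * Φ q) (Icc t₀ (-ε) ×ˢ univ) p) :
    (∀ i, dirDeriv (e i) Φ p = 0) ∧ frameLap e Φ p ≤ 0 ∧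
      (-p.1 - ε) * dirDeriv (1, 0) Φ p ≤ Φ p := by
  have hU := isOpen_lowerHalfSpace (n := n)
  have hpU : p ∈ lowerHalfSpace n := ⟨by simp; linarith, trivial⟩
  have hs : 0 < -p.1 - ε := by linarith
  have hG : ContDiffOn ℝ ∞ (fun q : ℝ × (Fin n → ℝ) => (-q.1 - ε) * Φ q) (lowerHalfSpace n) :=
    (contDiff_fst.neg.sub contDiff_const).contDiffOn.mul hΦ
  have hdG := hG.differentiableAt_of_isOpen hU hpU
  have hDG (w : ℝ × (Fin n → ℝ)) : EqOn (dirDeriv w fun q => (-q.1 - ε) * Φ q)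
      (fun q => (-q.1 - ε) * dirDeriv w Φ q - w.1 * Φ q) (lowerHalfSpace n) :=
    fun q hq => dirDeriv_weight_mul ε (hΦ.differentiableAt_of_isOpen hU hq)
  have hline (i : ι) : IsLocalMax (fun r : ℝ => (-(p + r • e i).1 - ε) * Φ (p + r • e i)) 0 :=
    Eventually.of_forall fun r => by
      have hmem : p + r • e i ∈ Icc t₀ (-ε) ×ˢ univ := ⟨by simpa [he] using hp.1, trivial⟩
      simpa [he] using hmax hmem
  refine ⟨fun i => ?_, Finset.sum_nonpos fun i _ => ?_, ?_⟩
  · have h := dirDeriv_eq_zero_of_isLocalMax_line hdG (hline i)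
    simp only [hDG _ hpU, he, zero_mul, sub_zero] at h
    exact (mul_eq_zero.1 h).resolve_left hs.ne'
  · have h := dirDeriv_dirDeriv_nonpos_of_isLocalMax_line hG hU hpU (hline i)
    rw [dirDeriv_congr hU (hDG _) hpU] at h
    simp only [he, zero_mul, sub_zero] at h
    rw [dirDeriv_weight_mul ε ((hΦ.dirDeriv hU _).differentiableAt_of_isOpen hU hpU), he,
      zero_mul, sub_zero] at h
    exact nonpos_of_mul_nonpos_right h hs
  · have h := dirDeriv_nonpos_of_isMaxOn (w := (1, 0)) hmax hdG ?_
    · rw [hDG _ hpU] at h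
      simpa [sub_nonpos] using h
    · filter_upwards [Ioo_mem_nhdsGT (show (0 : ℝ) < -ε - p.1 by linarith)] with r hr
      exact ⟨⟨by simp; linarith [hp.1.1, hr.1], by simp; linarith [hr.2]⟩, trivial⟩

theorem weighted_harnackQuantity_le_of_isMaxOn (he : ∀ i, (e i).1 = 0)
    (hv : ContDiffOn ℝ ∞ v (lowerHalfSpace n))
    (hPDE : EqOn (dirDeriv (1, 0) v) (fun q => -frameLap e v q + frameGradSq e v q)
      (lowerHalfSpace n))
    {t₀ ε : ℝ} (hε : 0 < ε) {p : ℝ × (Fin n → ℝ)} (hp : p ∈ Icc t₀ (-ε) ×ˢ univ)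
    (hmax : IsMaxOn (fun q => (-q.1 - ε) * harnackQuantity e v q) (Icc t₀ (-ε) ×ˢ univ) p) :
    (-p.1 - ε) * harnackQuantity e v p ≤ 2 * Fintype.card ι := by
  have hU := isOpen_lowerHalfSpace (n := n)
  have hcard : (0 : ℝ) ≤ Fintype.card ι := Nat.cast_nonneg _
  rcases hp.1.2.eq_or_lt with hend | hpε
  · simp [hend, hcard]
  have hs : 0 < -p.1 - ε := by linarith
  rcases le_or_gt (harnackQuantity e v p) 0 with hΦ | hΦ
  · nlinarith
  obtain ⟨hgrad, hlap, htime⟩ :=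
    derivative_tests_of_isMaxOn he (hv.harnackQuantity hU) hp hpε hε hmax
  have hkey : dirDeriv (1, 0) (harnackQuantity e v) p =
      -frameLap e (harnackQuantity e v) p + 2 * frameHessSq e v p := by
    have hpU : p ∈ lowerHalfSpace n := ⟨by simp; linarith, trivial⟩
    simp [dirDeriv_harnackQuantity hv hU hPDE hpU, hgrad]
  have htrace : frameLap e v p ^ 2 ≤ Fintype.card ι * frameHessSq e v p :=
    sq_sum_diag_le_card_mul_sum_sq fun i j => dirDeriv (e i) (dirDeriv (e j) v) p
  have hΦlap : harnackQuantity e v p ≤ 2 * frameLap e v p := by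
    have : 0 ≤ frameGradSq e v p := Finset.sum_nonneg fun i _ => sq_nonneg _
    simp only [harnackQuantity]; linarith
  have hH : 2 * (-p.1 - ε) * frameHessSq e v p ≤ harnackQuantity e v p := by
    nlinarith
  have hsq : harnackQuantity e v p ^ 2 ≤ 4 * Fintype.card ι * frameHessSq e v p := by
    nlinarith
  refine le_of_mul_le_mul_left ?_ hΦ
  nlinarith [mul_le_mul_of_nonneg_left hsq hs.le, mul_le_mul_of_nonneg_left hH hcard]

theorem harnackQuantity_periodic
    (hper : ∀ t < (0 : ℝ), ∀ x (m : Fin n → ℤ), v (t, x + fun i => (m i : ℝ)) = v (t, x))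
    {t : ℝ} (ht : t < 0) (x : Fin n → ℝ) (m : Fin n → ℤ) :
    harnackQuantity e v (t, x + fun i => (m i : ℝ)) = harnackQuantity e v (t, x) := by
  have hc : EqOn (fun q => v (q + ((0 : ℝ), fun i => (m i : ℝ)))) v (lowerHalfSpace n) :=
    fun ⟨s, y⟩ hq => by simpa using hper s hq.1 y m
  have h := harnackQuantity_congr (e := e) isOpen_lowerHalfSpace hc
    (show (t, x) ∈ lowerHalfSpace n from ⟨ht, trivial⟩)
  rw [harnackQuantity_comp_add_right] at h
  simpa using h

theorem neg_mul_harnackQuantity_le (he : ∀ i, (e i).1 = 0)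
    (hv : ContDiffOn ℝ ∞ v (lowerHalfSpace n))
    (hPDE : EqOn (dirDeriv (1, 0) v) (fun q => -frameLap e v q + frameGradSq e v q)
      (lowerHalfSpace n))
    (hper : ∀ t < (0 : ℝ), ∀ x (m : Fin n → ℤ), v (t, x + fun i => (m i : ℝ)) = v (t, x))
    {t : ℝ} (ht : t < 0) (x : Fin n → ℝ) :
    -t * harnackQuantity e v (t, x) ≤ 2 * Fintype.card ι := by
  have hU := isOpen_lowerHalfSpace (n := n)
  have hε : ∀ ε ∈ Ioo 0 (-t), (-t - ε) * harnackQuantity e v (t, x) ≤ 2 * Fintype.card ι := by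
    rintro ε ⟨hε, hεt⟩
    have hK : Icc t (-ε) ×ˢ univ ⊆ lowerHalfSpace n :=
      fun q hq => ⟨show q.1 < 0 by linarith [hq.1.2], trivial⟩
    obtain ⟨p, hp, hmax⟩ := exists_isMaxOn_prod_univ_of_periodic isCompact_Icc
      (nonempty_Icc.2 (by linarith)) (g := fun q => (-q.1 - ε) * harnackQuantity e v q)
      (((continuous_fst.neg.sub continuous_const).continuousOn.mul
        (hv.harnackQuantity hU).continuousOn).mono hK)
      (fun s hs y m => by
        simp only [harnackQuantity_periodic hper (hs.2.trans_lt (neg_neg_of_pos hε)) y m])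
    have htx : ((t, x) : ℝ × (Fin n → ℝ)) ∈ Icc t (-ε) ×ˢ univ :=
      ⟨⟨le_rfl, by linarith⟩, trivial⟩
    exact (hmax htx).trans
      (weighted_harnackQuantity_le_of_isMaxOn he hv hPDE hε hp hmax)
  have hlim : Tendsto (fun ε : ℝ => (-t - ε) * harnackQuantity e v (t, x)) (𝓝[>] 0)
      (𝓝 (-t * harnackQuantity e v (t, x))) := by
    have hc : Continuous fun ε : ℝ => (-t - ε) * harnackQuantity e v (t, x) := by fun_prop
    simpa using (hc.tendsto 0).mono_left nhdsWithin_le_nhds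
  exact le_of_tendsto hlim (eventually_of_mem (Ioo_mem_nhdsGT (neg_pos.2 ht)) hε)

end MaximumPrinciple

section Coordinates

variable {n : ℕ}

theorem two_mul_lap_sub_gradSq_eq {g : ℝ × (Fin n → ℝ) → ℝ}
    (hg : ContDiffOn ℝ ∞ g (lowerHalfSpace n)) {t : ℝ} (ht : t < 0) (x : Fin n → ℝ) :
    2 * lap (fun y => g (t, y)) x - gradSq (fun y => g (t, y)) x =
      harnackQuantity (spaceFrame n) g (t, x) :=
  harnackQuantity_slice (e := fun i => Pi.single i 1) hg isOpen_lowerHalfSpace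
    (fun _ => ⟨ht, trivial⟩) x

theorem dirDeriv_eq_neg_frameLap_of_backward_heat {f : ℝ → (Fin n → ℝ) → ℝ}
    (hf : ContDiffOn ℝ ∞ (fun p : ℝ × (Fin n → ℝ) => f p.1 p.2) (lowerHalfSpace n))
    (hheat : ∀ t < (0 : ℝ), ∀ x, deriv (fun s => f s x) t = -lap (f t) x) :
    EqOn (dirDeriv (1, 0) fun p => f p.1 p.2)
      (fun p => -frameLap (spaceFrame n) (fun p => f p.1 p.2) p) (lowerHalfSpace n) := by
  rintro ⟨t, x⟩ ⟨ht, -⟩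
  rw [← deriv_slice (hf.differentiableAt_of_isOpen isOpen_lowerHalfSpace ⟨ht, trivial⟩),
    hheat t ht x]
  exact congrArg Neg.neg
    (frameLap_slice hf isOpen_lowerHalfSpace (fun _ => ⟨ht, trivial⟩) x)

end Coordinates

theorem backward_harnack_H_nonpos_general
    (n : ℕ) (f : ℝ → (Fin n → ℝ) → ℝ)
    (hsmooth : ContDiffOn ℝ (⊤ : ℕ∞) (fun p : ℝ × (Fin n → ℝ) => f p.1 p.2)
      (Set.Iio 0 ×ˢ Set.univ))
    (hpos : ∀ t < (0:ℝ), ∀ x : Fin n → ℝ, 0 < f t x)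
    (hbheat : ∀ t < (0:ℝ), ∀ x : Fin n → ℝ, deriv (fun s => f s x) t = -lap (f t) x)
    (hper : ∀ t < (0:ℝ), ∀ x : Fin n → ℝ, ∀ m : Fin n → ℤ,
      f t (x + fun i => (m i : ℝ)) = f t x)
    (u : ℝ → (Fin n → ℝ) → ℝ) (hu : ∀ t x, u t x = -Real.log (f t x)) :
    ∀ t < (0:ℝ), ∀ x : Fin n → ℝ,
      2 * lap (u t) x - gradSq (u t) x - 2 * n / (-t) ≤ 0 := by
  intro t ht x
  have hv : ContDiffOn ℝ ∞ (fun p : ℝ × (Fin n → ℝ) => -Real.log (f p.1 p.2))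
      (lowerHalfSpace n) :=
    (hsmooth.log fun p hp => (hpos p.1 hp.1 p.2).ne').neg
  have hPDE := dirDeriv_neg_log_of_heat hsmooth isOpen_lowerHalfSpace
    (fun p hp => hpos p.1 hp.1 p.2) (dirDeriv_eq_neg_frameLap_of_backward_heat hsmooth hbheat)
  have hbound := neg_mul_harnackQuantity_le (fun _ => rfl) hv hPDE
    (fun s hs y m => by simp only [hper s hs y m]) ht x
  rw [funext (hu t), two_mul_lap_sub_gradSq_eq hv ht, sub_nonpos, le_div_iff₀ (neg_pos.2 ht)]
  simpa [mul_comm] using hbound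

/-- Proposition 5.1: for a positive periodic solution of the backward heat equation
`∂f/∂t = −Δf` (on `t < 0`, with `τ = −t`), `u = −ln f` satisfies
`2Δu − |∇u|² − 2n/τ ≤ 0`. -/
theorem backward_harnack_H_nonpos
    (n : ℕ) (hn : 1 ≤ n) (f : ℝ → (Fin n → ℝ) → ℝ)
    (hsmooth : ContDiffOn ℝ (⊤ : ℕ∞) (fun p : ℝ × (Fin n → ℝ) => f p.1 p.2)
      (Set.Iio 0 ×ˢ Set.univ))
    (hpos : ∀ t < (0:ℝ), ∀ x : Fin n → ℝ, 0 < f t x)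
    (hbheat : ∀ t < (0:ℝ), ∀ x : Fin n → ℝ, deriv (fun s => f s x) t = -lap (f t) x)
    (hper : ∀ t < (0:ℝ), ∀ x : Fin n → ℝ, ∀ m : Fin n → ℤ,
      f t (x + fun i => (m i : ℝ)) = f t x)
    (u : ℝ → (Fin n → ℝ) → ℝ) (hu : ∀ t x, u t x = -Real.log (f t x)) :
    ∀ t < (0:ℝ), ∀ x : Fin n → ℝ,
      2 * lap (u t) x - gradSq (u t) x - 2 * n / (-t) ≤ 0 :=
  backward_harnack_H_nonpos_general n f hsmooth hpos hbheat hper u hu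
end
end
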